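/- Let a, b, k be positive integers with 2k < b, and let R be the rectangle of cells {0,...,b-1} x {0,...,a-1}. Let N be a set of cells whose span is at most D, where D is a natural number with D <= b - 2k + 1, and let f be any function mapping every cell of R to a cell of N. Then the sum over all cells p of R of the Manhattan distance between p and f(p) is at least k * a * (b - 2k + 1 - D). -/

import Mathlib

/-- Manhattan distance between two cells of the integer grid. -/
def mdist (p q : ℤ × ℤ) : ℕ := (p.1 - q.1).natAbs + (p.2 - q.2).natAbs

/-- The disc of radius `r` centered at `c`: all cells at Manhattan distance at most `r`. -/
noncomputable def disc (r : ℕ) (c : ℤ × ℤ) : Finset (ℤ × ℤ) :=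
  (Finset.Icc (c.1 - r, c.2 - r) (c.1 + r, c.2 + r)).filter (fun p => mdist p c ≤ r)

/-- The span of a finite set of cells: the maximum Manhattan distance between two of
its cells (`0` if the set has at most one cell). -/
def span (S : Finset (ℤ × ℤ)) : ℕ := (S ×ˢ S).sup fun pq => mdist pq.1 pq.2


/-! In each row, pair the cell in column `x < k` with its mirror image in column `b - 1 - x`.
The two cells are at distance `b - 1 - 2x ≥ b - 2k + 1`, while their images lie in `N`, at
distance at most `D`; by the triangle inequality the pair travels at least `b - 2k + 1 - D`.
The `k` pairs of a row are disjoint because `2k < b`, and there are `a` rows. -/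

lemma mdist_comm (p q : ℤ × ℤ) : mdist p q = mdist q p := by
  simp only [mdist]; omega

lemma mdist_triangle (p q r : ℤ × ℤ) : mdist p r ≤ mdist p q + mdist q r := by
  simp only [mdist]; omega

lemma mdist_mk_left_eq (x x' y : ℤ) : mdist (x, y) (x', y) = (x - x').natAbs := by
  simp [mdist]

lemma mdist_le_span {S : Finset (ℤ × ℤ)} {p q : ℤ × ℤ} (hp : p ∈ S) (hq : q ∈ S) :
    mdist p q ≤ span S :=
  Finset.le_sup (f := fun pq : (ℤ × ℤ) × (ℤ × ℤ) => mdist pq.1 pq.2) (b := (p, q))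
    (Finset.mem_product.2 ⟨hp, hq⟩)

lemma mdist_le_add_span_add {S : Finset (ℤ × ℤ)} {p q p' q' : ℤ × ℤ} (hp' : p' ∈ S)
    (hq' : q' ∈ S) : mdist p q ≤ mdist p p' + span S + mdist q q' :=
  calc mdist p q ≤ mdist p p' + mdist p' q' + mdist q' q :=
        (mdist_triangle p q' q).trans (add_le_add_left (mdist_triangle p p' q') _)
    _ ≤ mdist p p' + span S + mdist q q' := by
        rw [mdist_comm q' q]
        gcongr
        exact mdist_le_span hp' hq'

lemma nsmul_le_sum_Icc_of_le_add_reflect {M : Type*} [AddCommMonoid M] [PartialOrder M]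
    [IsOrderedAddMonoid M] [CanonicallyOrderedAdd M] {g : ℤ → M} {b k : ℕ} {c : M}
    (hkb : 2 * k ≤ b) (h : ∀ x ∈ Finset.Ico (0 : ℤ) k, c ≤ g x + g (b - 1 - x)) :
    k • c ≤ ∑ x ∈ Finset.Icc (0 : ℤ) (b - 1), g x := by
  have hdisj : Disjoint (Finset.Ico (0 : ℤ) k) (Finset.Ioc ((b : ℤ) - 1 - k) (b - 1)) := by
    rw [Finset.disjoint_left]
    intro x hx hx'
    simp only [Finset.mem_Ico, Finset.mem_Ioc] at hx hx'
    omega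
  have hsub : Finset.Ico (0 : ℤ) k ∪ Finset.Ioc ((b : ℤ) - 1 - k) (b - 1) ⊆
      Finset.Icc (0 : ℤ) (b - 1) := by
    intro x hx
    simp only [Finset.mem_union, Finset.mem_Ico, Finset.mem_Ioc, Finset.mem_Icc] at hx ⊢
    omega
  have hreflect : ∑ x ∈ Finset.Ico (0 : ℤ) k, g (b - 1 - x) =
      ∑ x ∈ Finset.Ioc ((b : ℤ) - 1 - k) (b - 1), g x := by
    apply Finset.sum_nbij' (fun x => (b : ℤ) - 1 - x) (fun x => (b : ℤ) - 1 - x)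
    all_goals intro x hx
    all_goals simp only [Finset.mem_Ico, Finset.mem_Ioc] at hx ⊢
    all_goals omega
  calc k • c = (Finset.Ico (0 : ℤ) k).card • c := by simp
    _ ≤ ∑ x ∈ Finset.Ico (0 : ℤ) k, (g x + g (b - 1 - x)) := Finset.card_nsmul_le_sum _ _ _ h
    _ = ∑ x ∈ Finset.Ico (0 : ℤ) k ∪ Finset.Ioc ((b : ℤ) - 1 - k) (b - 1), g x := by
        rw [Finset.sum_add_distrib, hreflect, Finset.sum_union hdisj]
    _ ≤ ∑ x ∈ Finset.Icc (0 : ℤ) (b - 1), g x := Finset.sum_le_sum_of_subset hsub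

theorem rectangle_transport_lower_bound_general (a b k : ℕ)
    (hkb : 2 * k < b)
    (N : Finset (ℤ × ℤ)) (D : ℕ) (hN : span N ≤ D)
    (f : ℤ × ℤ → ℤ × ℤ)
    (hf : ∀ p ∈ Finset.Icc ((0 : ℤ), (0 : ℤ)) ((b : ℤ) - 1, (a : ℤ) - 1), f p ∈ N) :
    k * a * (b - 2 * k + 1 - D) ≤
      ∑ p ∈ Finset.Icc ((0 : ℤ), (0 : ℤ)) ((b : ℤ) - 1, (a : ℤ) - 1), mdist p (f p) := by
  rw [Finset.Icc_prod_def, Finset.sum_product_right]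
  have hrow : ∀ y ∈ Finset.Icc (0 : ℤ) (a - 1),
      k * (b - 2 * k + 1 - D) ≤ ∑ x ∈ Finset.Icc (0 : ℤ) (b - 1), mdist (x, y) (f (x, y)) := by
    intro y hy
    refine nsmul_le_sum_Icc_of_le_add_reflect hkb.le fun x hx => ?_
    have hmem : ∀ x' ∈ Finset.Icc (0 : ℤ) (b - 1), f (x', y) ∈ N := fun x' hx' =>
      hf _ (Finset.mem_product.2 ⟨hx', hy⟩)
    simp only [Finset.mem_Ico, Finset.mem_Icc] at hx hmem
    have hpair := mdist_le_add_span_add (p := (x, y)) (q := (b - 1 - x, y))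
      (hmem x (by omega)) (hmem (b - 1 - x) (by omega))
    rw [mdist_mk_left_eq] at hpair
    omega
  calc k * a * (b - 2 * k + 1 - D)
        = (Finset.Icc (0 : ℤ) (a - 1)).card • (k * (b - 2 * k + 1 - D)) := by
        simp only [Int.card_Icc, sub_add_cancel, sub_zero, Int.toNat_natCast, smul_eq_mul]; ring
    _ ≤ _ := Finset.card_nsmul_le_sum _ _ _ hrow

/-- Gathering the cells of an `a × b` rectangle into a set `N` of span at most
`D ≤ b - 2k + 1` requires total Manhattan travel at least `k ⬝ a ⬝ (b - 2k + 1 - D)`. -/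
theorem rectangle_transport_lower_bound (a b k : ℕ)
    (ha : 0 < a) (hb : 0 < b) (hk : 0 < k) (hkb : 2 * k < b)
    (N : Finset (ℤ × ℤ)) (D : ℕ) (hD : D ≤ b - 2 * k + 1) (hN : span N ≤ D)
    (f : ℤ × ℤ → ℤ × ℤ)
    (hf : ∀ p ∈ Finset.Icc ((0 : ℤ), (0 : ℤ)) ((b : ℤ) - 1, (a : ℤ) - 1), f p ∈ N) :
    k * a * (b - 2 * k + 1 - D) ≤
      ∑ p ∈ Finset.Icc ((0 : ℤ), (0 : ℤ)) ((b : ℤ) - 1, (a : ℤ) - 1), mdist p (f p) :=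
  rectangle_transport_lower_bound_general a b k hkb N D hN f hf
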